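/- arXiv:2201.07395 — 2 statements merged into one kernel-verified Lean document; each statement's English description precedes it below -/
import Mathlib

section
/- Let w, b, k be real numbers with w ≠ 0 and k ≠ 0. Then |∫_{-∞}^{∞} (cosh(w x + b))^{-2} e^{-i k x} dx| = π |k| / (w² · sinh(π |k| / (2|w|))). Consequently the magnitude of the Fourier transform at frequency k of the scaled-and-shifted activation sech²(wx+b) decays like exp(-π|k|/(2|w|)) as |k| → ∞, i.e., exponentially in frequency with rate governed by the input weight w. -/
open Real MeasureTheory

/-! With `σ` the logistic sigmoid, `σ(x) / σ(-x) = eˣ` and `sech² y = 4 σ(2y) σ(-2y)`, so the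
substitution `u = σ(2y)` turns `∫ sech² y e^{-iκy} dy` into the Beta integral
`2 B(1 - iκ/2, 1 + iκ/2) = 2 Γ(1 - iκ/2) Γ(1 + iκ/2)`, which the reflection formula evaluates to
`πκ / sinh(πκ/2)`. The affine substitution `y = wx + b` rescales the integral by `1/|w|`, turns
the frequency `k` into `k/w`, and contributes only a unimodular phase. -/

lemma ofReal_sigmoid_ne_zero (x : ℝ) : (sigmoid x : ℂ) ≠ 0 :=
  Complex.ofReal_ne_zero.mpr (sigmoid_pos x).ne'

lemma sigmoid_two_mul (y : ℝ) : sigmoid (2 * y) = exp y / (2 * cosh y) := by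
  rw [sigmoid_def, cosh_eq, show -(2 * y) = -y + -y by ring, exp_add, exp_neg]
  have := exp_pos y
  field_simp

lemma one_div_cosh_sq_eq_four_mul_sigmoid (y : ℝ) :
    1 / cosh y ^ 2 = 4 * (sigmoid (2 * y) * sigmoid (-(2 * y))) := by
  rw [← mul_neg, sigmoid_two_mul, sigmoid_two_mul, cosh_neg]
  have := cosh_pos y
  field_simp
  rw [mul_assoc, ← exp_add]
  norm_num

lemma log_sigmoid_sub_log_sigmoid_neg (x : ℝ) : log (sigmoid x) - log (sigmoid (-x)) = x := by
  rw [← sigmoid_mul_rexp_neg, log_mul (sigmoid_pos x).ne' (exp_pos _).ne', log_exp]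
  ring

theorem betaIntegral_eq_integral_sigmoid (a b : ℂ) :
    Complex.betaIntegral a b = ∫ x : ℝ, (sigmoid x : ℂ) ^ a * (sigmoid (-x) : ℂ) ^ b := by
  have h := integral_image_eq_integral_abs_deriv_smul MeasurableSet.univ
    (fun x _ ↦ (hasDerivAt_sigmoid x).hasDerivWithinAt) sigmoid_injective.injOn
    (fun u : ℝ ↦ (u : ℂ) ^ (a - 1) * (1 - (u : ℂ)) ^ (b - 1))
  rw [Set.image_univ, range_sigmoid, setIntegral_univ] at h
  rw [Complex.betaIntegral, intervalIntegral.integral_of_le zero_le_one,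
    integral_Ioc_eq_integral_Ioo, h]
  congr 1 with x
  have hx := ofReal_sigmoid_ne_zero x
  have hx' := ofReal_sigmoid_ne_zero (-x)
  have h1 : 1 - (sigmoid x : ℂ) = (sigmoid (-x) : ℂ) := by
    rw [sigmoid_neg]
    push_cast
    ring
  rw [← sigmoid_neg, abs_of_pos (mul_pos (sigmoid_pos x) (sigmoid_pos (-x))), Complex.real_smul,
    h1, Complex.cpow_sub _ _ hx, Complex.cpow_sub _ _ hx', Complex.cpow_one, Complex.cpow_one]
  push_cast
  field_simp

lemma sigmoid_cpow_mul_sigmoid_neg_cpow (s : ℂ) (x : ℝ) :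
    (sigmoid x : ℂ) ^ (1 + s) * (sigmoid (-x) : ℂ) ^ (1 - s)
      = (sigmoid x * sigmoid (-x) : ℝ) * Complex.exp (s * x) := by
  have hx := ofReal_sigmoid_ne_zero x
  have hx' := ofReal_sigmoid_ne_zero (-x)
  have hexp : Complex.exp (s * x) = (sigmoid x : ℂ) ^ s / (sigmoid (-x) : ℂ) ^ s := by
    rw [Complex.cpow_def_of_ne_zero hx, Complex.cpow_def_of_ne_zero hx', ← Complex.exp_sub,
      ← Complex.ofReal_log (sigmoid_pos x).le, ← Complex.ofReal_log (sigmoid_pos (-x)).le,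
      ← sub_mul, ← Complex.ofReal_sub, log_sigmoid_sub_log_sigmoid_neg, mul_comm]
  rw [hexp, Complex.cpow_add _ _ hx, Complex.cpow_sub _ _ hx', Complex.cpow_one, Complex.cpow_one]
  push_cast
  field_simp

theorem integral_sigmoid_mul_sigmoid_neg_mul_exp (s : ℂ) :
    ∫ x : ℝ, ((sigmoid x * sigmoid (-x) : ℝ) : ℂ) * Complex.exp (s * x)
      = Complex.betaIntegral (1 + s) (1 - s) := by
  simp_rw [betaIntegral_eq_integral_sigmoid, sigmoid_cpow_mul_sigmoid_neg_cpow]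

theorem betaIntegral_one_add_one_sub {z : ℂ} (hz₀ : z ≠ 0) (hz : |z.re| < 1) :
    Complex.betaIntegral (1 + z) (1 - z) = π * z / Complex.sin (π * z) := by
  obtain ⟨hz₁, hz₂⟩ := abs_lt.mp hz
  have h := Complex.Gamma_mul_Gamma_eq_betaIntegral (s := 1 + z) (t := 1 - z)
    (by rw [Complex.add_re, Complex.one_re]; linarith)
    (by rw [Complex.sub_re, Complex.one_re]; linarith)
  rw [add_add_sub_cancel, Complex.Gamma_add_one 1 one_ne_zero, Complex.Gamma_one, mul_one,
    one_mul] at h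
  rw [← h, add_comm, Complex.Gamma_add_one z hz₀, mul_assoc, Complex.Gamma_mul_Gamma_one_sub,
    mul_div_left_comm, mul_div_assoc]

theorem betaIntegral_one_add_mul_I_one_sub {t : ℝ} (ht : t ≠ 0) :
    Complex.betaIntegral (1 + t * Complex.I) (1 - t * Complex.I)
      = ((π * t / sinh (π * t) : ℝ) : ℂ) := by
  have hsinh : sinh (π * t) ≠ 0 := by rw [sinh_ne_zero]; positivity
  rw [betaIntegral_one_add_one_sub (by simpa using ht) (by simp), ← mul_assoc,
    ← Complex.ofReal_mul, Complex.sin_mul_I, ← Complex.ofReal_sinh]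
  push_cast
  field_simp

theorem integral_one_div_cosh_sq_mul_exp {κ : ℝ} (hκ : κ ≠ 0) :
    ∫ y : ℝ, ((1 / cosh y ^ 2 : ℝ) : ℂ) * Complex.exp (-Complex.I * κ * y)
      = ((π * κ / sinh (π * κ / 2) : ℝ) : ℂ) := by
  set t := -κ / 2
  set g : ℝ → ℂ := fun x ↦ ((sigmoid x * sigmoid (-x) : ℝ) : ℂ) * Complex.exp (t * Complex.I * x)
  have hg : ∀ y : ℝ,
      ((1 / cosh y ^ 2 : ℝ) : ℂ) * Complex.exp (-Complex.I * κ * y) = 4 * g (2 * y) := by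
    intro y
    simp only [g, one_div_cosh_sq_eq_four_mul_sigmoid, t]
    push_cast
    ring_nf
  have ht : t ≠ 0 := by simp [t, hκ]
  have hsinh : sinh (π * κ / 2) ≠ 0 := by rw [sinh_ne_zero]; positivity
  calc _ = ∫ y : ℝ, 4 * g (2 * y) := by simp_rw [hg]
    _ = 4 * (|(2 : ℝ)⁻¹| • ∫ x : ℝ, g x) := by
      rw [integral_const_mul, Measure.integral_comp_mul_left]
    _ = 2 * Complex.betaIntegral (1 + t * Complex.I) (1 - t * Complex.I) := by
      rw [integral_sigmoid_mul_sigmoid_neg_mul_exp, abs_of_pos (by norm_num), Complex.real_smul]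
      push_cast
      ring
    _ = _ := by
      rw [betaIntegral_one_add_mul_I_one_sub ht, show π * t = -(π * κ / 2) by ring, sinh_neg]
      push_cast
      field_simp

theorem norm_integral_comp_mul_add_mul_exp (f : ℝ → ℂ) {w : ℝ} (hw : w ≠ 0) (b k : ℝ) :
    ‖∫ x : ℝ, f (w * x + b) * Complex.exp (-Complex.I * k * x)‖
      = |w|⁻¹ * ‖∫ y : ℝ, f y * Complex.exp (-Complex.I * (k / w : ℝ) * y)‖ := by
  set F : ℝ → ℂ := fun y ↦ f y * Complex.exp (-Complex.I * (k / w : ℝ) * y)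
  have hF : ∀ x : ℝ, f (w * x + b) * Complex.exp (-Complex.I * k * x)
      = F (w * x + b) * Complex.exp ((k * b / w : ℝ) * Complex.I) := by
    intro x
    have hwC : (w : ℂ) ≠ 0 := by exact_mod_cast hw
    simp only [F, mul_assoc, ← Complex.exp_add]
    congr 2
    push_cast
    field_simp
    ring
  simp_rw [hF, integral_mul_const, Measure.integral_comp_mul_left (fun y ↦ F (y + b)),
    integral_add_right_eq_self, norm_mul, Complex.norm_exp_ofReal_mul_I, mul_one, norm_smul,
    Real.norm_eq_abs, abs_abs, abs_inv]

/-- For `w ≠ 0`, `k ≠ 0`, the magnitude of the Fourier transform at frequency `k` of the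
scaled-and-shifted activation derivative `sech²(wx+b)` equals
`π|k| / (w² sinh(π|k|/(2|w|)))`, which decays exponentially in `|k|` with rate governed by
the input weight `w`. -/
theorem fourier_integral_sech_sq_scaled (w b k : ℝ) (hw : w ≠ 0) (hk : k ≠ 0) :
    ‖∫ x : ℝ, ((1 / (Real.cosh (w * x + b)) ^ 2 : ℝ) : ℂ) * Complex.exp (-Complex.I * k * x)‖
      = π * |k| / (w ^ 2 * Real.sinh (π * |k| / (2 * |w|))) := by
  have hsinh : sinh (π * |k| / (2 * |w|)) ≠ 0 := by
    rw [sinh_ne_zero]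
    positivity
  rw [norm_integral_comp_mul_add_mul_exp (fun y ↦ ((1 / cosh y ^ 2 : ℝ) : ℂ)) hw,
    integral_one_div_cosh_sq_mul_exp (div_ne_zero hk hw), Complex.norm_real, Real.norm_eq_abs]
  simp only [abs_div, abs_mul, abs_sinh, abs_of_pos pi_pos, abs_two]
  rw [← sq_abs w]
  field_simp
end

section
/- Let N ≥ 2, h = 1/N, and let A_N be the (N-1)×(N-1) symmetric matrix with 2/h² on the diagonal and -1/h² on the first off-diagonals, with eigenpairs A_N w_k = λ_k w_k, λ_k = (4/h²) sin²(kπ/(2N)), (w_k)_i = sin(ikπ/N). Suppose v : ℝ → ℝ^{N-1} solves the gradient flow dv/dt = -(1/N) A_N (A_N v(t) - g) of the least-squares residual loss, and let u* satisfy A_N u* = g. Then the error e(t) = v(t) - u* satisfies de/dt = -(1/N) A_N² e(t), and for each k, ⟨e(t), w_k⟩ = exp(-λ_k² t / N) ⟨e(0), w_k⟩. Since λ_k is strictly increasing in k, lower-frequency error components converge strictly slower under this gradient flow on the discretized differential operator. -/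
open Real Matrix

/-!
Subtracting `u*` turns the flow into the linear system `e' = -(1/N) A² e`. Since `A` is symmetric,
every eigenvector `w` of `A` is a left eigenvector of `A²`, so `⟨e, w⟩` solves a scalar linear ODE
and is an exponential. The sine modes are eigenvectors because
`sin((m-1)θ) + sin((m+1)θ) = 2 cos θ sin(mθ)` and `sin 0 = sin(kπ) = 0` supply the missing
neighbours in the first and last rows. The eigenvalues increase with `k` because
`kπ/(2N) ∈ [0, π/2]`, where `sin` is nonnegative and increasing.
-/

theorem eq_exp_mul_of_hasDerivAt_const_mul {f : ℝ → ℝ} {c : ℝ}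
    (hf : ∀ s, HasDerivAt f (c * f s) s) (t : ℝ) : f t = exp (c * t) * f 0 := by
  have hderiv : ∀ s, HasDerivAt (fun u => exp (-(c * u)) * f u) 0 s := by
    intro s
    have hexp : HasDerivAt (fun u => exp (-(c * u))) (exp (-(c * s)) * -c) s := by
      simpa using ((hasDerivAt_id s).const_mul c).neg.exp
    exact (hexp.mul (hf s)).congr_deriv (by ring)
  have hconst := is_const_of_deriv_eq_zero (fun s => (hderiv s).differentiableAt)
    (fun s => (hderiv s).deriv) t 0
  simp only [mul_zero, neg_zero, exp_zero, one_mul] at hconst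
  rw [← hconst, ← mul_assoc, ← exp_add, add_neg_cancel, exp_zero, one_mul]

section GradientFlow

variable {n : Type*} [Fintype n]

theorem gradientFlow_error_hasDerivAt {A : Matrix n n ℝ} {g u : n → ℝ} {v : ℝ → n → ℝ} {c : ℝ}
    (hode : ∀ t, HasDerivAt v (-(c • (A *ᵥ (A *ᵥ v t - g)))) t) (hu : A *ᵥ u = g) (t : ℝ) :
    HasDerivAt (fun s => v s - u) (-(c • ((A * A) *ᵥ (v t - u)))) t := by
  rw [← mulVec_mulVec, mulVec_sub, hu]
  exact (hode t).sub_const u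

theorem dotProduct_eq_exp_mul_of_hasDerivAt {M : Matrix n n ℝ} {e : ℝ → n → ℝ} {c μ : ℝ}
    {w : n → ℝ} (he : ∀ t, HasDerivAt e (-(c • (M *ᵥ e t))) t) (hw : w ᵥ* M = μ • w)
    (t : ℝ) : e t ⬝ᵥ w = exp (-(c * μ) * t) * (e 0 ⬝ᵥ w) := by
  refine eq_exp_mul_of_hasDerivAt_const_mul (f := fun s => e s ⬝ᵥ w) (fun s => ?_) t
  have hsum : HasDerivAt (fun s => e s ⬝ᵥ w) (-(c • (M *ᵥ e s)) ⬝ᵥ w) s :=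
    HasDerivAt.fun_sum fun i _ => (hasDerivAt_pi.mp (he s) i).mul_const (w i)
  convert hsum using 1
  rw [neg_dotProduct, smul_dotProduct, dotProduct_comm (M *ᵥ e s), dotProduct_mulVec, hw,
    smul_dotProduct, dotProduct_comm w, smul_eq_mul, smul_eq_mul]
  ring

theorem Matrix.IsSymm.vecMul_mul_self_eq_sq_smul {A : Matrix n n ℝ} (hA : A.IsSymm)
    {w : n → ℝ} {μ : ℝ} (hw : A *ᵥ w = μ • w) : w ᵥ* (A * A) = μ ^ 2 • w := by
  rw [← vecMul_vecMul, ← mulVec_transpose A w, hA.eq, hw, smul_vecMul, ← mulVec_transpose A w,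
    hA.eq, hw, smul_smul, sq]

end GradientFlow

theorem two_mul_sin_sub_sin_sub_sin_add (x θ : ℝ) :
    2 * sin x - sin (x - θ) - sin (x + θ) = 4 * sin (θ / 2) ^ 2 * sin x := by
  have hcos := cos_two_mul' (θ / 2)
  rw [mul_div_cancel₀ θ two_ne_zero, cos_sq'] at hcos
  rw [sin_sub, sin_add, hcos]
  ring

noncomputable def dirichletLaplacian (N : ℕ) (h : ℝ) : Matrix (Fin (N - 1)) (Fin (N - 1)) ℝ :=
  Matrix.of fun i j => if i = j then 2 / h ^ 2
    else if i.val + 1 = j.val ∨ j.val + 1 = i.val then -1 / h ^ 2 else 0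

noncomputable def sineMode (N k : ℕ) : Fin (N - 1) → ℝ :=
  fun i => sin ((i.val + 1) * k * π / N)

noncomputable def dirichletEigenvalue (N : ℕ) (h : ℝ) (k : ℕ) : ℝ :=
  4 / h ^ 2 * sin (k * π / (2 * N)) ^ 2

section dirichletLaplacian

variable (N : ℕ) (h : ℝ)

theorem dirichletLaplacian_isSymm : (dirichletLaplacian N h).IsSymm :=
  IsSymm.ext fun i j => by simp only [dirichletLaplacian, of_apply, eq_comm, or_comm]

variable {N}

theorem dirichletLaplacian_mulVec_apply (S : ℕ → ℝ) (hS0 : S 0 = 0) (hSN : S N = 0)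
    (i : Fin (N - 1)) :
    (dirichletLaplacian N h *ᵥ fun j => S (j + 1)) i
      = (2 * S (i + 1) - S i - S (i + 2)) / h ^ 2 := by
  have hentry : ∀ j : Fin (N - 1), dirichletLaplacian N h i j * S (j + 1) =
      (if (i : ℕ) = j then 2 / h ^ 2 * S (j + 1) else 0)
        + (if (i : ℕ) + 1 = j then -1 / h ^ 2 * S (j + 1) else 0)
        + (if (i : ℕ) = j + 1 then -1 / h ^ 2 * S (j + 1) else 0) := by
    intro j
    simp only [dirichletLaplacian, of_apply, Fin.ext_iff]
    split_ifs <;> first | omega | ring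
  have hbelow : ∑ j ∈ Finset.range (N - 1),
      (if (i : ℕ) = j + 1 then -1 / h ^ 2 * S (j + 1) else 0) = -1 / h ^ 2 * S i := by
    obtain ⟨_ | m, hi⟩ := i
    · simp [hS0]
    · simp [Finset.sum_ite_eq, (by omega : m < N - 1)]
  have habove : (if (i : ℕ) + 1 < N - 1 then -1 / h ^ 2 * S (i + 1 + 1) else 0)
      = -1 / h ^ 2 * S (i + 2) := by
    split_ifs
    · rfl
    · rw [(by omega : (i : ℕ) + 2 = N), hSN, mul_zero]
  simp only [mulVec, dotProduct, hentry]
  rw [Fin.sum_univ_eq_sum_range (fun j => (if (i : ℕ) = j then 2 / h ^ 2 * S (j + 1) else 0)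
    + (if (i : ℕ) + 1 = j then -1 / h ^ 2 * S (j + 1) else 0)
    + (if (i : ℕ) = j + 1 then -1 / h ^ 2 * S (j + 1) else 0))]
  simp only [Finset.sum_add_distrib, Finset.sum_ite_eq, Finset.mem_range, hbelow, if_pos i.isLt,
    habove]
  ring

theorem dirichletLaplacian_mulVec_sineMode (k : ℕ) :
    dirichletLaplacian N h *ᵥ sineMode N k = dirichletEigenvalue N h k • sineMode N k := by
  set θ : ℝ := k * π / N
  have hmode : sineMode N k = fun j : Fin (N - 1) => sin ((j + 1 : ℕ) * θ) := by
    funext j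
    simp only [sineMode, θ]
    push_cast
    ring_nf
  have hSN : sin ((N : ℕ) * θ) = 0 := by
    rcases eq_or_ne N 0 with rfl | hN
    · simp
    · rw [show (N : ℝ) * θ = k * π by simp only [θ]; field_simp]
      exact sin_nat_mul_pi k
  funext i
  rw [hmode, dirichletLaplacian_mulVec_apply h (fun m => sin (m * θ)) (by simp) hSN,
    Pi.smul_apply, smul_eq_mul]
  have := two_mul_sin_sub_sin_sub_sin_add (((i : ℕ) + 1 : ℕ) * θ) θ
  push_cast at this ⊢
  rw [show ((i : ℝ) + 2) * θ = ((i : ℝ) + 1) * θ + θ by ring,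
    show (i : ℝ) * θ = ((i : ℝ) + 1) * θ - θ by ring, this, dirichletEigenvalue,
    show (k : ℝ) * π / (2 * N) = θ / 2 by simp only [θ]; ring]
  ring

end dirichletLaplacian

theorem dirichletEigenvalue_strictMonoOn {N : ℕ} (hN : 0 < N) {h : ℝ} (hh : h ≠ 0) :
    StrictMonoOn (dirichletEigenvalue N h) (Set.Iic N) := by
  intro k hk k' hk' hkk'
  have hNpos : (0 : ℝ) < N := by exact_mod_cast hN
  have hangle : ∀ m : ℕ, m ≤ N → m * π / (2 * N) ∈ Set.Icc 0 (π / 2) := fun m hm =>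
    ⟨by positivity, by
      rw [div_le_div_iff₀ (by positivity) two_pos]
      nlinarith [pi_pos, (by exact_mod_cast hm : (m : ℝ) ≤ N)]⟩
  have hsin : sin (k * π / (2 * N)) < sin (k' * π / (2 * N)) := by
    refine strictMonoOn_sin (Set.Icc_subset_Icc (by linarith [pi_pos]) le_rfl (hangle k hk))
      (Set.Icc_subset_Icc (by linarith [pi_pos]) le_rfl (hangle k' hk')) ?_
    gcongr
  have hsin_nonneg : 0 ≤ sin (k * π / (2 * N)) :=
    sin_nonneg_of_nonneg_of_le_pi (hangle k hk).1 (by linarith [(hangle k hk).2, pi_pos])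
  unfold dirichletEigenvalue
  gcongr

/-- Gradient flow of the least-squares loss of the discretized differential operator:
for `dv/dt = -(1/N) A_N (A_N v - g)` and `A_N u* = g`, the error `e = v - u*` satisfies
`de/dt = -(1/N) A_N² e`, and its component along the frequency-`k` eigenvector `w_k`
decays as `exp(-λ_k² t / N)`; the eigenvalues `λ_k = (4/h²) sin²(kπ/(2N))` are strictly
increasing in `k`, so lower-frequency error components converge strictly slower. -/
theorem discrete_operator_gradient_flow (N : ℕ) (hN : 2 ≤ N) (h : ℝ) (hh : h = 1 / N)
    (A : Matrix (Fin (N - 1)) (Fin (N - 1)) ℝ)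
    (hA : ∀ i j : Fin (N - 1),
      A i j = if i = j then 2 / h ^ 2
        else if i.val + 1 = j.val ∨ j.val + 1 = i.val then -1 / h ^ 2 else 0)
    (g : Fin (N - 1) → ℝ) (v : ℝ → Fin (N - 1) → ℝ)
    (hode : ∀ t : ℝ, HasDerivAt v (-((1 / (N : ℝ)) • A.mulVec (A.mulVec (v t) - g))) t)
    (ustar : Fin (N - 1) → ℝ) (hustar : A.mulVec ustar = g) :
    (∀ t : ℝ, HasDerivAt (fun s => v s - ustar)
        (-((1 / (N : ℝ)) • (A * A).mulVec (v t - ustar))) t) ∧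
    (∀ k : ℕ, 1 ≤ k → k ≤ N - 1 → ∀ t : ℝ,
      dotProduct (v t - ustar)
          (fun i : Fin (N - 1) => Real.sin ((i.val + 1) * k * π / N))
        = Real.exp (-(4 / h ^ 2 * Real.sin (k * π / (2 * N)) ^ 2) ^ 2 * t / N) *
            dotProduct (v 0 - ustar)
              (fun i : Fin (N - 1) => Real.sin ((i.val + 1) * k * π / N))) ∧
    (∀ k k' : ℕ, 1 ≤ k → k < k' → k' ≤ N - 1 →
      4 / h ^ 2 * Real.sin (k * π / (2 * N)) ^ 2
        < 4 / h ^ 2 * Real.sin (k' * π / (2 * N)) ^ 2) := by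
  obtain rfl : A = dirichletLaplacian N h := Matrix.ext hA
  have herror := gradientFlow_error_hasDerivAt hode hustar
  refine ⟨herror, fun k _ _ t => ?_, fun k k' _ hkk' hk' => ?_⟩
  · have hmode := (dirichletLaplacian_isSymm N h).vecMul_mul_self_eq_sq_smul
      (dirichletLaplacian_mulVec_sineMode h k)
    calc (v t - ustar) ⬝ᵥ sineMode N k
        = exp (-(1 / N * dirichletEigenvalue N h k ^ 2) * t) * ((v 0 - ustar) ⬝ᵥ sineMode N k) :=
          dotProduct_eq_exp_mul_of_hasDerivAt herror hmode t
      _ = _ := by rw [dirichletEigenvalue]; congr 2; ring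
  · have hh0 : h ≠ 0 := by rw [hh]; positivity
    exact dirichletEigenvalue_strictMonoOn (by omega) hh0
      (Set.mem_Iic.mpr (by omega)) (Set.mem_Iic.mpr (by omega)) hkk'
end
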